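/- arXiv:1706.01266 — 2 statements merged into one kernel-verified Lean document; each statement's English description precedes it below -/
import Mathlib

section
/- Let p ≥ 3 be prime, a, b ∈ E_p, and x₀ the unique fixed point of g(u) = a(b²u² + 1)/(b² + u²) in E_p. If x₁ ∈ ℚ_p is any fixed point of g different from x₀, then |x₁|_p = 1 and |x₁ − 1|_p = 1; in particular x₁ ∉ E_p. -/
/-!
Clearing the denominator, the fixed points of `g` are the roots of
`x³ - ab²x² + b²x - a`. Dividing out the root `x₀` leaves `x² + c x + e` with `c = x₀ - ab²`
and `e = a / x₀`; as `a, b, x₀ ≡ 1` modulo the maximal ideal, `c ≡ 0` and `e ≡ 1`.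
The Newton polygon of `x² + c x + e` is flat, so its roots are units, and they reduce to
roots of `X² + 1`, which never vanishes at `X = 1` because `2` is a unit for odd `p`.
-/

section Field

variable {F : Type*} [Field F]

lemma cubic_eq_zero_of_isFixedPt {a b x : F} (hb : b ≠ 0)
    (h : Function.IsFixedPt (fun u => a * (b ^ 2 * u ^ 2 + 1) / (b ^ 2 + u ^ 2)) x) :
    x ^ 3 - a * b ^ 2 * x ^ 2 + b ^ 2 * x - a = 0 := by
  -- a vanishing denominator would give `x = 0` (as `y / 0 = 0`), hence `b ^ 2 = 0`
  have hden : b ^ 2 + x ^ 2 ≠ 0 := by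
    intro hden
    have hx : x = 0 := by rw [← h]; simp only [hden, div_zero]
    simp [hx, hb] at hden
  have h' : a * (b ^ 2 * x ^ 2 + 1) = x * (b ^ 2 + x ^ 2) := (div_eq_iff hden).1 h
  linear_combination -h'

lemma quadratic_eq_zero_of_cubic_eq_zero {s t u x₀ x₁ : F}
    (h₀ : x₀ ^ 3 - s * x₀ ^ 2 + t * x₀ - u = 0) (h₁ : x₁ ^ 3 - s * x₁ ^ 2 + t * x₁ - u = 0)
    (hne : x₁ ≠ x₀) (hx₀ : x₀ ≠ 0) :
    x₁ ^ 2 + (x₀ - s) * x₁ + u / x₀ = 0 := by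
  have hu : u / x₀ = x₀ ^ 2 - s * x₀ + t := by
    rw [div_eq_iff hx₀]
    linear_combination -h₀
  have hfactor : (x₁ - x₀) * (x₁ ^ 2 + (x₀ - s) * x₁ + u / x₀) = 0 := by
    rw [hu]
    linear_combination h₁ - h₀
  exact (mul_eq_zero.1 hfactor).resolve_left (sub_ne_zero.2 hne)

end Field

namespace IsUltrametricDist

variable {K : Type*} [NormedField K] [IsUltrametricDist K] {x y c e : K}

lemma norm_eq_one_of_norm_sub_one_lt_one (h : ‖x - 1‖ < 1) : ‖x‖ = 1 := by
  have hne : ‖x - 1‖ ≠ ‖(1 : K)‖ := by rw [norm_one]; exact h.ne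
  simpa [max_eq_right h.le] using norm_add_eq_max_of_norm_ne_norm hne

lemma ne_zero_of_norm_sub_one_lt_one (h : ‖x - 1‖ < 1) : x ≠ 0 :=
  norm_ne_zero_iff.1 (by rw [norm_eq_one_of_norm_sub_one_lt_one h]; exact one_ne_zero)

lemma norm_sub_lt_one_of_norm_sub_one_lt_one (hx : ‖x - 1‖ < 1) (hy : ‖y - 1‖ < 1) :
    ‖x - y‖ < 1 := by
  simpa only [dist_eq_norm, norm_sub_rev 1 y] using
    (dist_triangle_max x 1 y).trans_lt (max_lt (by rwa [dist_eq_norm]) (by rwa [dist_eq_norm']))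

lemma norm_mul_sub_one_lt_one (hx : ‖x - 1‖ < 1) (hy : ‖y - 1‖ < 1) : ‖x * y - 1‖ < 1 := by
  have hxy : x * y - 1 = (x - 1) * y + (y - 1) := by ring
  rw [hxy]
  refine (norm_add_le_max _ _).trans_lt (max_lt ?_ hy)
  rwa [norm_mul, norm_eq_one_of_norm_sub_one_lt_one hy, mul_one]

lemma norm_div_sub_one_lt_one (hx : ‖x - 1‖ < 1) (hy : ‖y - 1‖ < 1) : ‖x / y - 1‖ < 1 := by
  rw [div_sub_one (ne_zero_of_norm_sub_one_lt_one hy), norm_div,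
    norm_eq_one_of_norm_sub_one_lt_one hy, div_one]
  exact norm_sub_lt_one_of_norm_sub_one_lt_one hx hy

lemma norm_eq_one_of_quadratic_eq_zero (hc : ‖c‖ ≤ 1) (he : ‖e‖ = 1)
    (hx : x ^ 2 + c * x + e = 0) : ‖x‖ = 1 := by
  have hsmall : ¬ ‖x‖ < 1 := by
    intro hlt
    have hle : ‖e‖ ≤ max ‖x ^ 2‖ ‖c * x‖ := by
      rw [show e = -(x ^ 2 + c * x) by linear_combination hx, norm_neg]
      exact norm_add_le_max _ _
    rw [norm_pow, norm_mul, he] at hle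
    exact hle.not_gt (max_lt (by nlinarith [norm_nonneg x]) (by nlinarith [norm_nonneg c, norm_nonneg x]))
  have hlarge : ¬ 1 < ‖x‖ := by
    intro hlt
    have hle : ‖x ^ 2‖ ≤ max ‖c * x‖ ‖e‖ := by
      rw [show x ^ 2 = -(c * x + e) by linear_combination hx, norm_neg]
      exact norm_add_le_max _ _
    rw [norm_pow, norm_mul, he] at hle
    exact hle.not_gt (max_lt (by nlinarith [norm_nonneg c]) (by nlinarith))
  exact le_antisymm (not_lt.1 hlarge) (not_lt.1 hsmall)

lemma norm_sub_one_eq_one_of_quadratic_eq_zero (h2 : ‖(2 : K)‖ = 1) (hc : ‖c‖ < 1)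
    (he : ‖e - 1‖ < 1) (hx : x ^ 2 + c * x + e = 0) : ‖x - 1‖ = 1 := by
  have hx1 : ‖x‖ = 1 :=
    norm_eq_one_of_quadratic_eq_zero hc.le (norm_eq_one_of_norm_sub_one_lt_one he) hx
  have hle : ‖x - 1‖ ≤ 1 := by
    simpa [sub_eq_add_neg, hx1] using norm_add_le_max x (-1)
  refine le_antisymm hle (not_lt.1 fun hlt => h2.not_lt ?_)
  -- reducing `x² + c x + e = 0` at `x ≡ 1` gives `2 ≡ 0`
  have hsq : ‖x ^ 2 - 1‖ < 1 := by rw [sq]; exact norm_mul_sub_one_lt_one hlt hlt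
  have hcx : ‖c * x‖ < 1 := by rwa [norm_mul, hx1, mul_one]
  rw [show (2 : K) = -(x ^ 2 - 1) + (-(c * x) - (e - 1)) by linear_combination hx]
  refine (norm_add_le_max _ _).trans_lt (max_lt (by rwa [norm_neg]) ?_)
  rw [sub_eq_add_neg]
  exact (norm_add_le_max _ _).trans_lt (max_lt (by rwa [norm_neg]) (by rwa [norm_neg]))

end IsUltrametricDist

lemma Padic.norm_two_of_ne_two {p : ℕ} [hp : Fact p.Prime] (h2 : p ≠ 2) : ‖(2 : ℚ_[p])‖ = 1 := by
  have hcop : p.Coprime 2 := (Nat.coprime_primes hp.out Nat.prime_two).2 h2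
  exact_mod_cast Padic.norm_natCast_eq_one_iff.2 hcop

open IsUltrametricDist in
theorem stmt8_general (p : ℕ) [Fact p.Prime] (hp : 3 ≤ p) (a b : ℚ_[p])
    (ha : ‖a - 1‖ < 1) (hb : ‖b - 1‖ < 1) (x₀ x₁ : ℚ_[p])
    (hx0 : ‖x₀ - 1‖ < 1) (hfix0 : a * (b ^ 2 * x₀ ^ 2 + 1) / (b ^ 2 + x₀ ^ 2) = x₀)
    (hfix1 : a * (b ^ 2 * x₁ ^ 2 + 1) / (b ^ 2 + x₁ ^ 2) = x₁)
    (hne : x₁ ≠ x₀) :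
    ‖x₁‖ = 1 ∧ ‖x₁ - 1‖ = 1 := by
  have hb₀ := ne_zero_of_norm_sub_one_lt_one hb
  have hquad : x₁ ^ 2 + (x₀ - a * b ^ 2) * x₁ + a / x₀ = 0 :=
    quadratic_eq_zero_of_cubic_eq_zero (cubic_eq_zero_of_isFixedPt hb₀ hfix0)
      (cubic_eq_zero_of_isFixedPt hb₀ hfix1) hne (ne_zero_of_norm_sub_one_lt_one hx0)
  have hab2 : ‖a * b ^ 2 - 1‖ < 1 :=
    norm_mul_sub_one_lt_one ha (by rw [sq]; exact norm_mul_sub_one_lt_one hb hb)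
  have hc : ‖x₀ - a * b ^ 2‖ < 1 := norm_sub_lt_one_of_norm_sub_one_lt_one hx0 hab2
  have he : ‖a / x₀ - 1‖ < 1 := norm_div_sub_one_lt_one ha hx0
  exact ⟨norm_eq_one_of_quadratic_eq_zero hc.le (norm_eq_one_of_norm_sub_one_lt_one he) hquad,
    norm_sub_one_eq_one_of_quadratic_eq_zero (Padic.norm_two_of_ne_two (by omega)) hc he hquad⟩

theorem stmt8 (p : ℕ) [Fact p.Prime] (hp : 3 ≤ p) (a b : ℚ_[p])
    (ha : ‖a - 1‖ < 1) (hb : ‖b - 1‖ < 1) (x₀ x₁ : ℚ_[p])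
    (hx0 : ‖x₀ - 1‖ < 1) (hfix0 : a * (b ^ 2 * x₀ ^ 2 + 1) / (b ^ 2 + x₀ ^ 2) = x₀)
    (hd : b ^ 2 + x₁ ^ 2 ≠ 0)
    (hfix1 : a * (b ^ 2 * x₁ ^ 2 + 1) / (b ^ 2 + x₁ ^ 2) = x₁)
    (hne : x₁ ≠ x₀) :
    ‖x₁‖ = 1 ∧ ‖x₁ - 1‖ = 1 :=
  stmt8_general p hp a b ha hb x₀ x₁ hx0 hfix0 hfix1 hne
end

section
/- Let p ≥ 3 be prime, a, b ∈ E_p with b ≠ 1 and |a − 1|_p < |b − 1|_p, and x₀ ∈ E_p the fixed point of g(u) = a(b²u² + 1)/(b² + u²). Then |x₀ − 1|_p < |b − 1|_p. -/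
/-!
Clearing the denominator in the fixed-point equation gives
`(x₀ - a) (b² + x₀²) = a (b² - 1) (x₀² - 1)`. Here `a`, `b`, `x₀` are units, and so is
`b² + x₀² ≡ 2` since `p ≠ 2`; hence `|x₀ - a| ≤ |b - 1| |x₀ - 1| < |b - 1|`, and
`x₀ - 1 = (x₀ - a) + (a - 1)` is a sum of two terms smaller than `|b - 1|`.
-/

open IsUltrametricDist

section Ultrametric

lemma IsUltrametricDist.norm_eq_of_norm_sub_lt {E : Type*} [SeminormedAddGroup E]
    [IsUltrametricDist E] {x c : E} (h : ‖x - c‖ < ‖c‖) : ‖x‖ = ‖c‖ := by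
  simpa [max_eq_right h.le] using norm_add_eq_max_of_norm_ne_norm h.ne

lemma IsUltrametricDist.norm_add_lt_of_lt {E : Type*} [SeminormedAddGroup E]
    [IsUltrametricDist E] {x y : E} {r : ℝ} (hx : ‖x‖ < r) (hy : ‖y‖ < r) : ‖x + y‖ < r :=
  (norm_add_le_max x y).trans_lt (max_lt hx hy)

variable {K : Type*} [NormedField K] [IsUltrametricDist K]

lemma IsUltrametricDist.norm_eq_one_of_norm_sub_one_lt {x : K} (hx : ‖x - 1‖ < 1) : ‖x‖ = 1 := by
  simpa using norm_eq_of_norm_sub_lt (c := (1 : K)) (by simpa using hx)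

lemma IsUltrametricDist.norm_sq_sub_one_le {x : K} (hx : ‖x‖ ≤ 1) : ‖x ^ 2 - 1‖ ≤ ‖x - 1‖ := by
  have hx1 : ‖x + 1‖ ≤ 1 := (norm_add_le_max x 1).trans (by simpa using hx)
  rw [show x ^ 2 - 1 = (x - 1) * (x + 1) by ring, norm_mul]
  exact mul_le_of_le_one_right (norm_nonneg _) hx1

lemma IsUltrametricDist.norm_sq_add_sq_eq_one (h2 : ‖(2 : K)‖ = 1) {x y : K}
    (hx : ‖x - 1‖ < 1) (hy : ‖y - 1‖ < 1) : ‖x ^ 2 + y ^ 2‖ = 1 := by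
  have hx2 := norm_sq_sub_one_le (norm_eq_one_of_norm_sub_one_lt hx).le
  have hy2 := norm_sq_sub_one_le (norm_eq_one_of_norm_sub_one_lt hy).le
  rw [← h2]
  refine norm_eq_of_norm_sub_lt ?_
  rw [show x ^ 2 + y ^ 2 - 2 = (x ^ 2 - 1) + (y ^ 2 - 1) by ring, h2]
  exact norm_add_lt_of_lt (hx2.trans_lt hx) (hy2.trans_lt hy)

lemma IsUltrametricDist.norm_sub_one_lt_of_fixedPoint (h2 : ‖(2 : K)‖ = 1) {a b x : K}
    (hb : ‖b - 1‖ < 1) (hab : ‖a - 1‖ < ‖b - 1‖) (hx : ‖x - 1‖ < 1)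
    (hfix : a * (b ^ 2 * x ^ 2 + 1) / (b ^ 2 + x ^ 2) = x) : ‖x - 1‖ < ‖b - 1‖ := by
  have hden := norm_sq_add_sq_eq_one h2 hb hx
  have hden0 : b ^ 2 + x ^ 2 ≠ 0 := norm_ne_zero_iff.mp (by simp [hden])
  have key : (x - a) * (b ^ 2 + x ^ 2) = a * (b ^ 2 - 1) * (x ^ 2 - 1) := by
    rw [div_eq_iff hden0] at hfix
    linear_combination -hfix
  have hxa : ‖x - a‖ < ‖b - 1‖ := by
    have hpos : 0 < ‖b - 1‖ := (norm_nonneg _).trans_lt hab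
    calc ‖x - a‖ = ‖b ^ 2 - 1‖ * ‖x ^ 2 - 1‖ := by
          simpa [hden, norm_eq_one_of_norm_sub_one_lt (hab.trans hb), mul_assoc] using
            congr_arg norm key
      _ ≤ ‖b - 1‖ * ‖x - 1‖ := by
          gcongr
          exacts [norm_sq_sub_one_le (norm_eq_one_of_norm_sub_one_lt hb).le,
            norm_sq_sub_one_le (norm_eq_one_of_norm_sub_one_lt hx).le]
      _ < ‖b - 1‖ := mul_lt_of_lt_one_right hpos hx
  simpa using norm_add_lt_of_lt hxa hab

end Ultrametric

lemma Padic.norm_two_eq_one {p : ℕ} [Fact p.Prime] (hp : p ≠ 2) : ‖(2 : ℚ_[p])‖ = 1 := by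
  exact_mod_cast Padic.norm_natCast_eq_one_iff.mpr
    ((Nat.coprime_primes Fact.out Nat.prime_two).mpr hp)

theorem stmt12_general (p : ℕ) [Fact p.Prime] (hp : 3 ≤ p) (a b : ℚ_[p])
    (hb : ‖b - 1‖ < 1)
    (hab : ‖a - 1‖ < ‖b - 1‖) (x₀ : ℚ_[p]) (hx0 : ‖x₀ - 1‖ < 1)
    (hfix0 : a * (b ^ 2 * x₀ ^ 2 + 1) / (b ^ 2 + x₀ ^ 2) = x₀) :
    ‖x₀ - 1‖ < ‖b - 1‖ :=
  norm_sub_one_lt_of_fixedPoint (Padic.norm_two_eq_one (by omega)) hb hab hx0 hfix0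

theorem stmt12 (p : ℕ) [Fact p.Prime] (hp : 3 ≤ p) (a b : ℚ_[p])
    (ha : ‖a - 1‖ < 1) (hb : ‖b - 1‖ < 1) (hb1 : b ≠ 1)
    (hab : ‖a - 1‖ < ‖b - 1‖) (x₀ : ℚ_[p]) (hx0 : ‖x₀ - 1‖ < 1)
    (hfix0 : a * (b ^ 2 * x₀ ^ 2 + 1) / (b ^ 2 + x₀ ^ 2) = x₀) :
    ‖x₀ - 1‖ < ‖b - 1‖ :=
  stmt12_general p hp a b hb hab x₀ hx0 hfix0
end
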